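/- Andreief's identity: for continuous functions f_1,...,f_n and g_1,...,g_n on a measurable set E ⊂ ℝ with finite measure μ, one has det[∫_E f_j(z) g_k(z) dμ(z)]_{j,k=1}^n = (1/n!) ∫_{E^n} det[f_j(z_k)]_{j,k=1}^n · det[g_j(z_k)]_{j,k=1}^n dμ(z_1)...dμ(z_n). -/

import Mathlib

/-!
Expanding both determinants by the Leibniz formula writes the integrand as a signed double sum,
over pairs of permutations `(σ, τ)`, of products `∏ₖ f_{σ k}(z_k) g_{τ k}(z_k)` of functions of
one variable each; by Fubini each such term integrates to `∏ₖ A_{σ k, τ k}`, where `A` is the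
matrix of the integrals `∫ f_j g_k`. For fixed `σ` the sum over `τ` is already `det A`, so the
double sum is `n! · det A`.
-/

open MeasureTheory Matrix Equiv Equiv.Perm

namespace Matrix

variable {ι R : Type*} [Fintype ι] [DecidableEq ι] [CommRing R]

theorem det_mul_det_eq_sum_sum_perm (P Q : Matrix ι ι R) :
    P.det * Q.det = ∑ σ : Perm ι, ∑ τ : Perm ι,
      ((sign σ : ℤ) : R) * ((sign τ : ℤ) : R) * ∏ k, P (σ k) k * Q (τ k) k := by
  rw [det_apply', det_apply', Finset.sum_mul_sum]
  refine Fintype.sum_congr _ _ fun σ => Fintype.sum_congr _ _ fun τ => ?_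
  rw [Finset.prod_mul_distrib]
  ring

/-- Reindexing the rows by `σ` multiplies the determinant by `sign σ`, which the prefactor undoes. -/
theorem sum_sign_mul_sign_mul_prod_perm (A : Matrix ι ι R) (σ : Perm ι) :
    ∑ τ : Perm ι, ((sign σ : ℤ) : R) * ((sign τ : ℤ) : R) * ∏ k, A (σ k) (τ k) = A.det := by
  have hrows : ∑ τ : Perm ι, ((sign τ : ℤ) : R) * ∏ k, A (σ k) (τ k) =
      ((sign σ : ℤ) : R) * A.det := by
    rw [← det_permute σ A, ← det_transpose, det_apply']
    rfl
  have hsign : ((sign σ : ℤ) : R) * ((sign σ : ℤ) : R) = 1 := by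
    rw [← Int.cast_mul, ← Units.val_mul, Int.units_mul_self]
    simp
  simp_rw [mul_assoc, ← Finset.mul_sum, hrows, ← mul_assoc, hsign, one_mul]

theorem sum_sum_sign_mul_sign_mul_prod_perm (A : Matrix ι ι R) :
    ∑ σ : Perm ι, ∑ τ : Perm ι, ((sign σ : ℤ) : R) * ((sign τ : ℤ) : R) * ∏ k, A (σ k) (τ k) =
      (Fintype.card ι).factorial * A.det := by
  simp_rw [sum_sign_mul_sign_mul_prod_perm, Finset.sum_const, Finset.card_univ,
    Fintype.card_perm, nsmul_eq_mul]

end Matrix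

namespace MeasureTheory

variable {ι α 𝕜 : Type*} [Fintype ι] [DecidableEq ι] [MeasurableSpace α] [RCLike 𝕜]

theorem integral_det_mul_det (ν : Measure α) [SigmaFinite ν] (f g : ι → α → 𝕜)
    (hfg : ∀ j k, Integrable (fun z => f j z * g k z) ν) :
    ∫ z : ι → α, det (of fun j k => f j (z k)) * det (of fun j k => g j (z k))
        ∂(Measure.pi fun _ => ν) =
      (Fintype.card ι).factorial * det (of fun j k => ∫ z, f j z * g k z ∂ν) := by
  have hterm : ∀ σ τ : Perm ι, Integrable (fun z : ι → α =>
      ((sign σ : ℤ) : 𝕜) * ((sign τ : ℤ) : 𝕜) * ∏ k, f (σ k) (z k) * g (τ k) (z k))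
      (Measure.pi fun _ => ν) := fun σ τ =>
    (Integrable.fintype_prod fun k => hfg (σ k) (τ k)).const_mul _
  simp_rw [det_mul_det_eq_sum_sum_perm, of_apply]
  rw [integral_finsetSum _ fun σ _ => integrable_finsetSum _ fun τ _ => hterm σ τ,
    ← sum_sum_sign_mul_sign_mul_prod_perm]
  refine Fintype.sum_congr _ _ fun σ => ?_
  rw [integral_finsetSum _ fun τ _ => hterm σ τ]
  refine Fintype.sum_congr _ _ fun τ => ?_
  rw [integral_const_mul, integral_fintype_prod_eq_prod (fun k z => f (σ k) z * g (τ k) z)]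
  rfl

end MeasureTheory

theorem andreief_identity_general
    (n : ℕ) (E : Set ℝ)
    (μ : Measure ℝ) [IsFiniteMeasure μ]
    (f G : Fin n → ℝ → ℝ)
    (hint : ∀ j k, IntegrableOn (fun z => f j z * G k z) E μ) :
    Matrix.det (Matrix.of fun j k => ∫ z in E, f j z * G k z ∂μ) =
      (1 / (n.factorial : ℝ)) *
        ∫ z in Set.univ.pi (fun _ : Fin n => E),
          Matrix.det (Matrix.of fun j k => f j (z k)) *
            Matrix.det (Matrix.of fun j k => G j (z k)) ∂(Measure.pi fun _ => μ) := by
  rw [Measure.restrict_pi_pi, integral_det_mul_det _ f G hint, Fintype.card_fin]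
  field_simp

/-- Andreief's identity:
`det[∫_E f_j g_k dμ] = (1/n!) ∫_{E^n} det[f_j(z_k)] · det[g_j(z_k)] dμ⊗ⁿ`. -/
theorem andreief_identity
    (n : ℕ) (E : Set ℝ) (hE : MeasurableSet E)
    (μ : Measure ℝ) [IsFiniteMeasure μ]
    (f G : Fin n → ℝ → ℝ)
    (hf : ∀ j, Continuous (f j)) (hG : ∀ j, Continuous (G j))
    (hint : ∀ j k, IntegrableOn (fun z => f j z * G k z) E μ) :
    Matrix.det (Matrix.of fun j k => ∫ z in E, f j z * G k z ∂μ) =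
      (1 / (n.factorial : ℝ)) *
        ∫ z in Set.univ.pi (fun _ : Fin n => E),
          Matrix.det (Matrix.of fun j k => f j (z k)) *
            Matrix.det (Matrix.of fun j k => G j (z k)) ∂(Measure.pi fun _ => μ) :=
  andreief_identity_general n E μ f G hint
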